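/- arXiv:2605.04863 — 6 statements merged into one kernel-verified Lean document; each statement's English description precedes it below -/
import Mathlib

section
/- Fix an integer N ≥ 4, an index j : ZMod N, and θ ∈ [0,1]. For U : ZMod N → ℝ define T_θ U by (T_θ U)_{j−1} = (T_θ U)_j = θ·U_{j−1} + (1−θ)·U_j and (T_θ U)_i = U_i for i ∉ {j−1, j}. Then TV(T_θ U) ≤ TV(U), where TV(W) = ∑_{i : ZMod N} |W_i − W_{i−1}|. In particular the SRD averaging operator (θ = 1−α) and the pre-merging operator (θ = 1/(1+α)) are total variation diminishing. -/
/-- Lemma 4.1 (SRD is TVD): on a periodic grid of `N ≥ 4` cells, the operator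
`T_θ` that replaces the two cells `{j-1, j}` of the merging neighborhood by the
common convex combination `θ·U_{j-1} + (1-θ)·U_j` (for `θ ∈ [0,1]`) and leaves
all other cells unchanged is total variation diminishing. -/
theorem srd_averaging_is_TVD
    (N : ℕ) (hN : 4 ≤ N) [NeZero N] (j : ZMod N)
    (θ : ℝ) (hθ0 : 0 ≤ θ) (hθ1 : θ ≤ 1)
    (T : (ZMod N → ℝ) → (ZMod N → ℝ))
    (hT : ∀ (U : ZMod N → ℝ) (i : ZMod N),
      T U i = if i = j - 1 ∨ i = j then θ * U (j - 1) + (1 - θ) * U j else U i)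
    (U : ZMod N → ℝ) :
    ∑ i : ZMod N, |T U i - T U (i - 1)| ≤ ∑ i : ZMod N, |U i - U (i - 1)| := by
  have h2 : (2 : ZMod N) ≠ 0 := by
    intro h
    have := (ZMod.natCast_eq_zero_iff 2 N).mp (by exact_mod_cast h)
    have := Nat.le_of_dvd (by norm_num) this
    omega
  have h1' : (1 : ZMod N) ≠ 0 := by
    intro h
    have := (ZMod.natCast_eq_zero_iff 1 N).mp (by exact_mod_cast h)
    have := Nat.le_of_dvd (by norm_num) this
    omega
  -- distinctness
  have d1 : j - 1 ≠ j := by intro h; apply h1'; linear_combination -h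
  have d2 : j - 1 ≠ j + 1 := by intro h; apply h2; linear_combination -h
  have d3 : j ≠ j + 1 := by intro h; apply h1'; linear_combination -h
  have d4 : j - 1 - 1 ≠ j - 1 := by intro h; apply h1'; linear_combination -h
  have d5 : j - 1 - 1 ≠ j := by intro h; apply h2; linear_combination -h
  set s : Finset (ZMod N) := {j - 1, j, j + 1} with hs
  have key : ∀ i : ZMod N, i ∉ s → |T U i - T U (i - 1)| = |U i - U (i - 1)| := by
    intro i hi
    simp only [hs, Finset.mem_insert, Finset.mem_singleton, not_or] at hi
    obtain ⟨e1, e2, e3⟩ := hi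
    rw [hT, hT, if_neg, if_neg]
    · rintro (h | h)
      · exact e2 (by linear_combination h)
      · exact e3 (by linear_combination h)
    · tauto
  have split1 := Finset.sum_add_sum_compl s (fun i : ZMod N => |T U i - T U (i - 1)|)
  have split2 := Finset.sum_add_sum_compl s (fun i : ZMod N => |U i - U (i - 1)|)
  have hcompl : ∑ i ∈ sᶜ, |T U i - T U (i - 1)| = ∑ i ∈ sᶜ, |U i - U (i - 1)| :=
    Finset.sum_congr rfl (fun i hi => key i (by simpa using hi))
  rw [← split1, ← split2, hcompl]
  have hmain : ∑ i ∈ s, |T U i - T U (i - 1)| ≤ ∑ i ∈ s, |U i - U (i - 1)| := by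
    rw [hs]
    rw [Finset.sum_insert (by simp [d1, d2]), Finset.sum_insert (by simp [d3]),
        Finset.sum_singleton, Finset.sum_insert (by simp [d1, d2]),
        Finset.sum_insert (by simp [d3]), Finset.sum_singleton]
    have e1 : T U (j - 1) = θ * U (j - 1) + (1 - θ) * U j := by rw [hT]; simp
    have e2 : T U j = θ * U (j - 1) + (1 - θ) * U j := by rw [hT]; simp
    have e3 : T U (j - 1 - 1) = U (j - 1 - 1) := by
      rw [hT, if_neg]; rintro (h | h); exacts [d4 h, d5 h]
    have e4 : T U (j + 1) = U (j + 1) := by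
      rw [hT, if_neg]; rintro (h | h); exacts [d2 h.symm, d3 h.symm]
    have e5 : T U (j + 1 - 1) = T U j := by norm_num
    have e6 : U (j + 1 - 1) = U j := by norm_num
    rw [e1, e2, e3, e4, e5, e2, e6]
    set a := U (j - 1 - 1)
    set b := U (j - 1)
    set c := U j
    set d := U (j + 1)
    have k1 : |θ * b + (1 - θ) * c - a| ≤ |b - a| + (1 - θ) * |c - b| := by
      calc |θ * b + (1 - θ) * c - a| = |(b - a) + (1 - θ) * (c - b)| := by ring_nf
        _ ≤ |b - a| + |(1 - θ) * (c - b)| := abs_add_le _ _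
        _ = |b - a| + (1 - θ) * |c - b| := by
            rw [abs_mul, abs_of_nonneg (show (0:ℝ) ≤ 1 - θ by linarith)]
    have k2 : |d - (θ * b + (1 - θ) * c)| ≤ θ * |c - b| + |d - c| := by
      calc |d - (θ * b + (1 - θ) * c)| = |θ * (c - b) + (d - c)| := by ring_nf
        _ ≤ |θ * (c - b)| + |d - c| := abs_add_le _ _
        _ = θ * |c - b| + |d - c| := by rw [abs_mul, abs_of_nonneg hθ0]
    have k3 : |θ * b + (1 - θ) * c - (θ * b + (1 - θ) * c)| = 0 := by simp
    linarith [k1, k2, k3]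
  linarith [hmain]
end

section
/- Fix an integer N ≥ 4, an index j : ZMod N, and α with 0 < α < 1/2. Let S : (ZMod N → ℝ) → (ZMod N → ℝ) be the SRD operator that replaces both entries U_{j−1} and U_j by Q̂(U) = (1−α)·U_{j−1} + α·U_j and leaves all other entries unchanged, and for s ∈ ℝ let R(s)U = (1−s)·U + s·(S U) componentwise. Then for every U : ZMod N → ℝ and every s ∈ [0,1], TV(R(s)U) ≤ TV(U), where TV(W) = ∑_{i : ZMod N} |W_i − W_{i−1}|. -/
/-- Lemma 4.3 (blended redistribution is TVD): on a periodic grid of `N ≥ 4`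
cells with small cut cell `j` of volume fraction `α ∈ (0, 1/2)` merging left,
the blended UM-SRD operator `R(s) = (1-s)·Id + s·S` — where `S` replaces both
entries `U_{j-1}` and `U_j` by `Q̂(U) = (1-α)·U_{j-1} + α·U_j` — is total
variation diminishing for every `s ∈ [0,1]`. -/
theorem blended_redistribution_is_TVD
    (N : ℕ) (hN : 4 ≤ N) [NeZero N] (j : ZMod N)
    (α : ℝ) (hα0 : 0 < α) (hα1 : α < 1/2)
    (S : (ZMod N → ℝ) → (ZMod N → ℝ))
    (hS : ∀ (U : ZMod N → ℝ) (i : ZMod N),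
      S U i = if i = j - 1 ∨ i = j then (1 - α) * U (j - 1) + α * U j else U i)
    (R : ℝ → (ZMod N → ℝ) → (ZMod N → ℝ))
    (hR : ∀ (s : ℝ) (U : ZMod N → ℝ) (i : ZMod N),
      R s U i = (1 - s) * U i + s * S U i)
    (U : ZMod N → ℝ) (s : ℝ) (hs0 : 0 ≤ s) (hs1 : s ≤ 1) :
    ∑ i : ZMod N, |R s U i - R s U (i - 1)| ≤ ∑ i : ZMod N, |U i - U (i - 1)| := by
  have h1 : (1 : ZMod N) ≠ 0 := by
    have : ¬ ((1:ℕ):ZMod N) = 0 := by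
      rw [ZMod.natCast_eq_zero_iff]
      intro h; have := Nat.le_of_dvd one_pos h; omega
    simpa using this
  have h2 : (2 : ZMod N) ≠ 0 := by
    have : ¬ ((2:ℕ):ZMod N) = 0 := by
      rw [ZMod.natCast_eq_zero_iff]
      intro h; have := Nat.le_of_dvd (by norm_num) h; omega
    simpa using this
  -- distinctness facts
  have dm1 : j - 1 ≠ j := fun h => h1 (by linear_combination -h)
  have dp1 : j + 1 ≠ j := fun h => h1 (by linear_combination h)
  have dp1m1 : j + 1 ≠ j - 1 := fun h => h2 (by linear_combination h)
  have dm2m1 : j - 1 - 1 ≠ j - 1 := fun h => h1 (by linear_combination -h)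
  have dm2 : j - 1 - 1 ≠ j := fun h => h2 (by linear_combination -h)
  set f : ZMod N → ℝ := fun i => |R s U i - R s U (i - 1)| with hf
  set g : ZMod N → ℝ := fun i => |U i - U (i - 1)| with hg
  set T : Finset (ZMod N) := {j - 1, j, j + 1} with hT
  have hRout : ∀ i : ZMod N, i ≠ j - 1 → i ≠ j → R s U i = U i := by
    intro i hi1 hi2
    rw [hR, hS, if_neg (by tauto)]; ring
  have hcompl : ∀ i ∈ Tᶜ, f i = g i := by
    intro i hi
    simp only [hT, Finset.mem_compl, Finset.mem_insert, Finset.mem_singleton, not_or] at hi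
    obtain ⟨hi1, hi2, hi3⟩ := hi
    have e1 : R s U i = U i := hRout i hi1 hi2
    have e2 : R s U (i - 1) = U (i - 1) := by
      apply hRout
      · intro h; exact hi2 (by linear_combination h)
      · intro h; exact hi3 (by linear_combination h)
    simp [hf, hg, e1, e2]
  have hmem1 : j - 1 ∉ ({j, j + 1} : Finset (ZMod N)) := by
    simp [dm1, Ne.symm dp1m1]
  have hmem2 : j ∉ ({j + 1} : Finset (ZMod N)) := by simp [Ne.symm dp1]
  have hsumT : ∀ h : ZMod N → ℝ, ∑ i ∈ T, h i = h (j - 1) + h j + h (j + 1) := by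
    intro h
    rw [hT, Finset.sum_insert hmem1, Finset.sum_insert hmem2, Finset.sum_singleton]
    ring
  -- values
  have vjm1 : R s U (j - 1) = (1 - s) * U (j - 1) + s * ((1 - α) * U (j - 1) + α * U j) := by
    rw [hR, hS, if_pos (Or.inl rfl)]
  have vj : R s U j = (1 - s) * U j + s * ((1 - α) * U (j - 1) + α * U j) := by
    rw [hR, hS, if_pos (Or.inr rfl)]
  have vjm2 : R s U (j - 1 - 1) = U (j - 1 - 1) := hRout _ dm2m1 dm2
  have vjp1 : R s U (j + 1) = U (j + 1) := by
    apply hRout _ dp1m1 dp1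
  have key : ∑ i ∈ T, f i ≤ ∑ i ∈ T, g i := by
    rw [hsumT f, hsumT g]
    simp only [hf, hg]
    have ejp : j + 1 - 1 = j := by ring
    rw [ejp, vjm1, vj, vjm2, vjp1]
    set a := U (j - 1); set b := U j; set c := U (j - 1 - 1); set d := U (j + 1)
    have e1 : (1 - s) * a + s * ((1 - α) * a + α * b) - c
        = (a - c) + (s * α) * (b - a) := by ring
    have e2 : (1 - s) * b + s * ((1 - α) * a + α * b) - ((1 - s) * a + s * ((1 - α) * a + α * b))
        = (1 - s) * (b - a) := by ring
    have e3 : d - ((1 - s) * b + s * ((1 - α) * a + α * b))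
        = (d - b) + (s * (1 - α)) * (b - a) := by ring
    rw [e1, e2, e3]
    have t1 : |(a - c) + (s * α) * (b - a)| ≤ |a - c| + s * α * |b - a| := by
      calc |(a - c) + (s * α) * (b - a)| ≤ |a - c| + |(s * α) * (b - a)| := abs_add_le _ _
        _ = |a - c| + s * α * |b - a| := by
          rw [abs_mul, abs_of_nonneg (mul_nonneg hs0 hα0.le)]
    have t2 : |(1 - s) * (b - a)| = (1 - s) * |b - a| := by
      rw [abs_mul, abs_of_nonneg (by linarith)]
    have t3 : |(d - b) + (s * (1 - α)) * (b - a)| ≤ |d - b| + s * (1 - α) * |b - a| := by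
      calc |(d - b) + (s * (1 - α)) * (b - a)| ≤ |d - b| + |(s * (1 - α)) * (b - a)| := abs_add_le _ _
        _ = |d - b| + s * (1 - α) * |b - a| := by
          rw [abs_mul, abs_of_nonneg (mul_nonneg hs0 (by linarith))]
    have hsum : s * α * |b - a| + (1 - s) * |b - a| + s * (1 - α) * |b - a| = |b - a| := by ring
    linarith [t1, t2, t3]
  calc ∑ i : ZMod N, f i = ∑ i ∈ T, f i + ∑ i ∈ Tᶜ, f i := (Finset.sum_add_sum_compl T f).symm
    _ ≤ ∑ i ∈ T, g i + ∑ i ∈ Tᶜ, g i := by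
        exact add_le_add key (le_of_eq (Finset.sum_congr rfl hcompl))
    _ = ∑ i : ZMod N, g i := Finset.sum_add_sum_compl T g
end

section
/- Fix an integer N ≥ 5, an index j : ZMod N, α with 0 < α < 1/2, and ν ∈ [0,1]. Define three operators on states U : ZMod N → ℝ: (i) the pre-merge P assigns to both entries j−1 and j the volume-weighted average (U_{j−1} + α·U_j)/(1+α) and leaves other entries unchanged; (ii) the merged-mesh upwind update B maps V to W with W_i = V_i − ν·(V_i − V_{i−1}) for i ∉ {j−1, j} and W_{j−1} = W_j = V_{j−1} − (ν/(1+α))·(V_{j−1} − V_{j−2}); (iii) for s ∈ [0,1], the blended redistribution R(s)W = (1−s)·W + s·(S W), where S replaces both W_{j−1} and W_j by (1−α)·W_{j−1} + α·W_j and leaves other entries unchanged. Then for every U and every s ∈ [0,1], TV(R(s)(B(P U))) ≤ TV(U), where TV(W) = ∑_{i : ZMod N} |W_i − W_{i−1}|. -/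
section UMSRDAux

variable {N : ℕ} [NeZero N]

private lemma abs_comb (a b x y : ℝ) (ha : 0 ≤ a) (hb : 0 ≤ b) :
    |a * x + b * y| ≤ a * |x| + b * |y| := by
  calc |a * x + b * y| ≤ |a * x| + |b * y| := abs_add_le _ _
    _ = a * |x| + b * |y| := by rw [abs_mul, abs_mul, abs_of_nonneg ha, abs_of_nonneg hb]

private lemma sum_shift (V : ZMod N → ℝ) :
    ∑ i : ZMod N, |V (i - 1) - V (i - 1 - 1)| = ∑ i : ZMod N, |V i - V (i - 1)| :=
  Fintype.sum_equiv (Equiv.subRight 1) _ _ fun _ => rfl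

private lemma sum_split3 (a b c : ZMod N) (hab : a ≠ b) (hac : a ≠ c) (hbc : b ≠ c)
    (f : ZMod N → ℝ) :
    ∑ i, f i = f a + f b + f c + ∑ i ∈ ({a, b, c} : Finset (ZMod N))ᶜ, f i := by
  rw [← Finset.sum_add_sum_compl {a, b, c} f]
  congr 1
  rw [show ({a, b, c} : Finset (ZMod N)) = insert a (insert b {c}) from rfl,
    Finset.sum_insert (by simp [hab, hac]), Finset.sum_insert (by simp [hbc]),
    Finset.sum_singleton]
  ring

private lemma tv_merge (j : ZMod N) (h1 : (1 : ZMod N) ≠ 0) (h2 : (2 : ZMod N) ≠ 0)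
    (β : ℝ) (hβ0 : 0 ≤ β) (hβ1 : β ≤ 1) (W W' : ZMod N → ℝ)
    (h : ∀ i, W' i = if i = j - 1 ∨ i = j then (1 - β) * W (j - 1) + β * W j else W i) :
    ∑ i, |W' i - W' (i - 1)| ≤ ∑ i, |W i - W (i - 1)| := by
  have hd1 : j - 1 ≠ j := fun hh => h1 (sub_eq_self.mp hh)
  have hd2 : j - 1 ≠ j + 1 := fun hh => h2 (by linear_combination -hh)
  have hd3 : j ≠ j + 1 := fun hh => h1 (by linear_combination -hh)
  have e1 : j - 1 - 1 = j - 2 := by ring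
  have e2 : j + 1 - 1 = j := by ring
  have hj2a : j - 2 ≠ j - 1 := fun hh => h1 (by linear_combination -hh)
  have hj2b : j - 2 ≠ j := fun hh => h2 (by linear_combination -hh)
  have hc1 : W' (j - 1) = (1 - β) * W (j - 1) + β * W j := by
    rw [h, if_pos (Or.inl rfl)]
  have hc2 : W' j = (1 - β) * W (j - 1) + β * W j := by
    rw [h, if_pos (Or.inr rfl)]
  have hc3 : W' (j + 1) = W (j + 1) := by
    rw [h, if_neg (by rintro (hh | hh); exacts [hd2 hh.symm, hd3 hh.symm])]
  have hc4 : W' (j - 2) = W (j - 2) := by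
    rw [h, if_neg (by rintro (hh | hh); exacts [hj2a hh, hj2b hh])]
  have split' := sum_split3 (j - 1) j (j + 1) hd1 hd2 hd3 (fun i => |W' i - W' (i - 1)|)
  have split := sum_split3 (j - 1) j (j + 1) hd1 hd2 hd3 (fun i => |W i - W (i - 1)|)
  rw [split', split]
  have hrest : ∑ i ∈ ({j - 1, j, j + 1} : Finset (ZMod N))ᶜ, |W' i - W' (i - 1)|
      = ∑ i ∈ ({j - 1, j, j + 1} : Finset (ZMod N))ᶜ, |W i - W (i - 1)| := by
    apply Finset.sum_congr rfl
    intro i hi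
    simp only [Finset.mem_compl, Finset.mem_insert, Finset.mem_singleton] at hi
    push_neg at hi
    obtain ⟨hia, hib, hic⟩ := hi
    have hni : ¬(i = j - 1 ∨ i = j) := by
      rintro (hh | hh)
      exacts [hia hh, hib hh]
    have hni' : ¬(i - 1 = j - 1 ∨ i - 1 = j) := by
      rintro (hh | hh)
      · exact hib (by linear_combination hh)
      · exact hic (by linear_combination hh)
    rw [h i, h (i - 1), if_neg hni, if_neg hni']
  rw [hrest, e1, e2, hc1, hc2, hc3, hc4]
  have k1 : |(1 - β) * W (j - 1) + β * W j - W (j - 2)|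
      ≤ 1 * |W (j - 1) - W (j - 2)| + β * |W j - W (j - 1)| := by
    have h' := abs_comb 1 β (W (j - 1) - W (j - 2)) (W j - W (j - 1)) zero_le_one hβ0
    have he : (1 - β) * W (j - 1) + β * W j - W (j - 2)
        = 1 * (W (j - 1) - W (j - 2)) + β * (W j - W (j - 1)) := by ring
    rw [he]; exact h'
  have k2 : |W (j + 1) - ((1 - β) * W (j - 1) + β * W j)|
      ≤ 1 * |W (j + 1) - W j| + (1 - β) * |W j - W (j - 1)| := by
    have h' := abs_comb 1 (1 - β) (W (j + 1) - W j) (W j - W (j - 1)) zero_le_one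
      (by linarith)
    have he : W (j + 1) - ((1 - β) * W (j - 1) + β * W j)
        = 1 * (W (j + 1) - W j) + (1 - β) * (W j - W (j - 1)) := by ring
    rw [he]; exact h'
  have k3 : |((1 - β) * W (j - 1) + β * W j) - ((1 - β) * W (j - 1) + β * W j)| = 0 := by
    simp
  have hnn : 0 ≤ |W j - W (j - 1)| := abs_nonneg _
  linarith

private lemma tv_upwind (j : ZMod N) (h1 : (1 : ZMod N) ≠ 0) (h2 : (2 : ZMod N) ≠ 0)
    (α ν : ℝ) (hα0 : 0 < α) (hν0 : 0 ≤ ν) (hν1 : ν ≤ 1)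
    (V W : ZMod N → ℝ) (hV : V j = V (j - 1))
    (hW : ∀ i, W i = if i = j - 1 ∨ i = j
        then V (j - 1) - (ν / (1 + α)) * (V (j - 1) - V (j - 2))
        else V i - ν * (V i - V (i - 1))) :
    ∑ i, |W i - W (i - 1)| ≤ ∑ i, |V i - V (i - 1)| := by
  have hα1 : (0 : ℝ) < 1 + α := by linarith
  have hμ0 : 0 ≤ ν / (1 + α) := div_nonneg hν0 hα1.le
  have hμν : ν / (1 + α) ≤ ν := div_le_self hν0 (by linarith)
  have hd1 : j - 1 ≠ j := fun hh => h1 (sub_eq_self.mp hh)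
  have hd2 : j - 1 ≠ j + 1 := fun hh => h2 (by linear_combination -hh)
  have hd3 : j ≠ j + 1 := fun hh => h1 (by linear_combination -hh)
  have e1 : j - 1 - 1 = j - 2 := by ring
  have e2 : j + 1 - 1 = j := by ring
  have hj2a : j - 2 ≠ j - 1 := fun hh => h1 (by linear_combination -hh)
  have hj2b : j - 2 ≠ j := fun hh => h2 (by linear_combination -hh)
  have hc1 : W (j - 1) = V (j - 1) - (ν / (1 + α)) * (V (j - 1) - V (j - 2)) := by
    rw [hW, if_pos (Or.inl rfl)]
  have hc2 : W j = V (j - 1) - (ν / (1 + α)) * (V (j - 1) - V (j - 2)) := by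
    rw [hW, if_pos (Or.inr rfl)]
  have hc3 : W (j + 1) = V (j + 1) - ν * (V (j + 1) - V (j + 1 - 1)) := by
    rw [hW, if_neg (by rintro (hh | hh); exacts [hd2 hh.symm, hd3 hh.symm])]
  rw [e2] at hc3
  have hc4 : W (j - 2) = V (j - 2) - ν * (V (j - 2) - V (j - 2 - 1)) := by
    rw [hW, if_neg (by rintro (hh | hh); exacts [hj2a hh, hj2b hh])]
  -- the generic bound function
  have hsum : ∑ i : ZMod N, ((1 - ν) * |V i - V (i - 1)| + ν * |V (i - 1) - V (i - 1 - 1)|)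
      = ∑ i : ZMod N, |V i - V (i - 1)| := by
    rw [Finset.sum_add_distrib, ← Finset.mul_sum, ← Finset.mul_sum, sum_shift V]
    ring
  have split' := sum_split3 (j - 1) j (j + 1) hd1 hd2 hd3 (fun i => |W i - W (i - 1)|)
  have split := sum_split3 (j - 1) j (j + 1) hd1 hd2 hd3
    (fun i => (1 - ν) * |V i - V (i - 1)| + ν * |V (i - 1) - V (i - 1 - 1)|)
  rw [← hsum, split', split]
  have hrest : ∑ i ∈ ({j - 1, j, j + 1} : Finset (ZMod N))ᶜ, |W i - W (i - 1)|
      ≤ ∑ i ∈ ({j - 1, j, j + 1} : Finset (ZMod N))ᶜ,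
        ((1 - ν) * |V i - V (i - 1)| + ν * |V (i - 1) - V (i - 1 - 1)|) := by
    apply Finset.sum_le_sum
    intro i hi
    simp only [Finset.mem_compl, Finset.mem_insert, Finset.mem_singleton] at hi
    push_neg at hi
    obtain ⟨hia, hib, hic⟩ := hi
    have hni : ¬(i = j - 1 ∨ i = j) := by
      rintro (hh | hh)
      exacts [hia hh, hib hh]
    have hni' : ¬(i - 1 = j - 1 ∨ i - 1 = j) := by
      rintro (hh | hh)
      · exact hib (by linear_combination hh)
      · exact hic (by linear_combination hh)
    rw [hW i, hW (i - 1), if_neg hni, if_neg hni']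
    have he : V i - ν * (V i - V (i - 1)) - (V (i - 1) - ν * (V (i - 1) - V (i - 1 - 1)))
        = (1 - ν) * (V i - V (i - 1)) + ν * (V (i - 1) - V (i - 1 - 1)) := by ring
    rw [he]
    exact abs_comb _ _ _ _ (by linarith) hν0
  rw [e1, e2, hc1, hc2, hc3, hc4]
  have hz : |V j - V (j - 1)| = 0 := by rw [hV]; simp
  have t1 : |V (j - 1) - ν / (1 + α) * (V (j - 1) - V (j - 2))
        - (V (j - 2) - ν * (V (j - 2) - V (j - 2 - 1)))|
      ≤ (1 - ν / (1 + α)) * |V (j - 1) - V (j - 2)| + ν * |V (j - 2) - V (j - 2 - 1)| := by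
    have he : V (j - 1) - ν / (1 + α) * (V (j - 1) - V (j - 2))
          - (V (j - 2) - ν * (V (j - 2) - V (j - 2 - 1)))
        = (1 - ν / (1 + α)) * (V (j - 1) - V (j - 2))
          + ν * (V (j - 2) - V (j - 2 - 1)) := by ring
    rw [he]
    exact abs_comb _ _ _ _ (by linarith) hν0
  have t2 : |V (j - 1) - ν / (1 + α) * (V (j - 1) - V (j - 2))
        - (V (j - 1) - ν / (1 + α) * (V (j - 1) - V (j - 2)))| = 0 := by simp
  have t3 : |V (j + 1) - ν * (V (j + 1) - V j)
        - (V (j - 1) - ν / (1 + α) * (V (j - 1) - V (j - 2)))|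
      ≤ (1 - ν) * |V (j + 1) - V j| + (ν / (1 + α)) * |V (j - 1) - V (j - 2)| := by
    have he : V (j + 1) - ν * (V (j + 1) - V j)
          - (V (j - 1) - ν / (1 + α) * (V (j - 1) - V (j - 2)))
        = (1 - ν) * (V (j + 1) - V j)
          + (ν / (1 + α)) * (V (j - 1) - V (j - 2)) := by linear_combination hV
    rw [he]
    exact abs_comb _ _ _ _ (by linarith) hμ0
  have hnn1 : 0 ≤ |V (j - 1) - V (j - 2)| := abs_nonneg _
  linarith

private lemma tv_blend (j : ZMod N) (h1 : (1 : ZMod N) ≠ 0) (h2 : (2 : ZMod N) ≠ 0)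
    (β s : ℝ) (hβ0 : 0 ≤ β) (hβ1 : β ≤ 1) (hs0 : 0 ≤ s) (hs1 : s ≤ 1)
    (W T Rw : ZMod N → ℝ)
    (hT : ∀ i, T i = if i = j - 1 ∨ i = j then (1 - β) * W (j - 1) + β * W j else W i)
    (hRw : ∀ i, Rw i = (1 - s) * W i + s * T i) :
    ∑ i, |Rw i - Rw (i - 1)| ≤ ∑ i, |W i - W (i - 1)| := by
  have hTle := tv_merge j h1 h2 β hβ0 hβ1 W T hT
  calc ∑ i, |Rw i - Rw (i - 1)|
      ≤ ∑ i : ZMod N, ((1 - s) * |W i - W (i - 1)| + s * |T i - T (i - 1)|) := by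
        apply Finset.sum_le_sum
        intro i _
        have hid : Rw i - Rw (i - 1)
            = (1 - s) * (W i - W (i - 1)) + s * (T i - T (i - 1)) := by
          rw [hRw i, hRw (i - 1)]; ring
        rw [hid]
        exact abs_comb _ _ _ _ (by linarith) hs0
    _ = (1 - s) * ∑ i, |W i - W (i - 1)| + s * ∑ i, |T i - T (i - 1)| := by
        rw [Finset.sum_add_distrib, ← Finset.mul_sum, ← Finset.mul_sum]
    _ ≤ ∑ i, |W i - W (i - 1)| := by
        have := mul_le_mul_of_nonneg_left hTle hs0
        linarith

end UMSRDAux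

/-- Theorem 4.4 (UM-SRD is TVD under the full-mesh CFL condition): one full
UM-SRD time step `R(s) ∘ B ∘ P` — pre-merging `P`, merged-mesh first-order
upwind update `B` with full-mesh CFL number `ν ∈ [0,1]`, and blended state
redistribution `R(s)` with `s ∈ [0,1]` — is total variation diminishing on a
periodic grid of `N ≥ 5` cells with one small cut cell `j` of volume fraction
`α ∈ (0, 1/2)` merging left. -/
theorem umsrd_step_is_TVD
    (N : ℕ) (hN : 5 ≤ N) [NeZero N] (j : ZMod N)
    (α : ℝ) (hα0 : 0 < α) (hα1 : α < 1/2)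
    (ν : ℝ) (hν0 : 0 ≤ ν) (hν1 : ν ≤ 1)
    (P : (ZMod N → ℝ) → (ZMod N → ℝ))
    (hP : ∀ (U : ZMod N → ℝ) (i : ZMod N),
      P U i = if i = j - 1 ∨ i = j then (U (j - 1) + α * U j) / (1 + α) else U i)
    (B : (ZMod N → ℝ) → (ZMod N → ℝ))
    (hB : ∀ (V : ZMod N → ℝ) (i : ZMod N),
      B V i = if i = j - 1 ∨ i = j
        then V (j - 1) - (ν / (1 + α)) * (V (j - 1) - V (j - 2))
        else V i - ν * (V i - V (i - 1)))
    (S : (ZMod N → ℝ) → (ZMod N → ℝ))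
    (hS : ∀ (W : ZMod N → ℝ) (i : ZMod N),
      S W i = if i = j - 1 ∨ i = j then (1 - α) * W (j - 1) + α * W j else W i)
    (R : ℝ → (ZMod N → ℝ) → (ZMod N → ℝ))
    (hR : ∀ (s : ℝ) (W : ZMod N → ℝ) (i : ZMod N),
      R s W i = (1 - s) * W i + s * S W i)
    (U : ZMod N → ℝ) (s : ℝ) (hs0 : 0 ≤ s) (hs1 : s ≤ 1) :
    ∑ i : ZMod N, |R s (B (P U)) i - R s (B (P U)) (i - 1)|
      ≤ ∑ i : ZMod N, |U i - U (i - 1)| := by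
  have h1 : (1 : ZMod N) ≠ 0 := by
    intro hh
    have h' : ((1 : ℕ) : ZMod N) = 0 := by exact_mod_cast hh
    have := (ZMod.natCast_eq_zero_iff 1 N).mp h'
    have := Nat.le_of_dvd one_pos this
    omega
  have h2 : (2 : ZMod N) ≠ 0 := by
    intro hh
    have h' : ((2 : ℕ) : ZMod N) = 0 := by exact_mod_cast hh
    have := (ZMod.natCast_eq_zero_iff 2 N).mp h'
    have := Nat.le_of_dvd two_pos this
    omega
  have hαpos : (0 : ℝ) < 1 + α := by linarith
  have hβ0 : 0 ≤ α / (1 + α) := div_nonneg hα0.le hαpos.le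
  have hβ1 : α / (1 + α) ≤ 1 := by
    rw [div_le_one hαpos]; linarith
  have hP' : ∀ i, P U i = if i = j - 1 ∨ i = j
      then (1 - α / (1 + α)) * U (j - 1) + (α / (1 + α)) * U j else U i := by
    intro i
    rw [hP U i]
    by_cases hcase : i = j - 1 ∨ i = j
    · rw [if_pos hcase, if_pos hcase]
      have hne : (1 : ℝ) + α ≠ 0 := by linarith
      field_simp
      try ring
    · rw [if_neg hcase, if_neg hcase]
  have tv1 : ∑ i, |P U i - P U (i - 1)| ≤ ∑ i, |U i - U (i - 1)| :=
    tv_merge j h1 h2 (α / (1 + α)) hβ0 hβ1 U (P U) hP'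
  have hVj : P U j = P U (j - 1) := by
    rw [hP U j, hP U (j - 1), if_pos (Or.inr rfl), if_pos (Or.inl rfl)]
  have tv2 : ∑ i, |B (P U) i - B (P U) (i - 1)| ≤ ∑ i, |P U i - P U (i - 1)| :=
    tv_upwind j h1 h2 α ν hα0 hν0 hν1 (P U) (B (P U)) hVj (hB (P U))
  have tv3 : ∑ i, |R s (B (P U)) i - R s (B (P U)) (i - 1)|
      ≤ ∑ i, |B (P U) i - B (P U) (i - 1)| :=
    tv_blend j h1 h2 α s hα0.le (by linarith) hs0 hs1
      (B (P U)) (S (B (P U))) (R s (B (P U))) (hS (B (P U))) (hR s (B (P U)))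
  linarith
end

section
/- Fix an integer N ≥ 5, an index j : ZMod N, α with 0 < α < 1/2, h > 0, and ν ∈ [0,1]. Let cell volumes be V_i = h for i ≠ j and V_j = α·h. With the operators P, B, and R(s) defined as follows — P assigns to both entries j−1 and j the value (U_{j−1} + α·U_j)/(1+α) and leaves other entries unchanged; B maps V to W with W_i = V_i − ν·(V_i − V_{i−1}) for i ∉ {j−1, j} and W_{j−1} = W_j = V_{j−1} − (ν/(1+α))·(V_{j−1} − V_{j−2}); R(s)W = (1−s)·W + s·(S W) where S replaces both W_{j−1} and W_j by (1−α)·W_{j−1} + α·W_j — the full UM-SRD step is conservative: for every U : ZMod N → ℝ and every s ∈ [0,1], ∑_{i : ZMod N} V_i · [R(s)(B(P U))]_i = ∑_{i : ZMod N} V_i · U_i. -/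
/-- Global conservation of the composite UM-SRD scheme: with cell volumes
`V_i = h` for `i ≠ j` and `V_j = α·h`, one full UM-SRD step `R(s) ∘ B ∘ P`
(pre-merging, merged-mesh first-order upwind update with full-mesh CFL number
`ν ∈ [0,1]`, and blended redistribution with `s ∈ [0,1]`) conserves the
volume-weighted total state. -/
theorem umsrd_step_is_conservative
    (N : ℕ) (hN : 5 ≤ N) [NeZero N] (j : ZMod N)
    (α : ℝ) (hα0 : 0 < α) (hα1 : α < 1/2)
    (h : ℝ) (hh : 0 < h)
    (ν : ℝ) (hν0 : 0 ≤ ν) (hν1 : ν ≤ 1)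
    (Vol : ZMod N → ℝ)
    (hVol : ∀ i, Vol i = if i = j then α * h else h)
    (P : (ZMod N → ℝ) → (ZMod N → ℝ))
    (hP : ∀ (U : ZMod N → ℝ) (i : ZMod N),
      P U i = if i = j - 1 ∨ i = j then (U (j - 1) + α * U j) / (1 + α) else U i)
    (B : (ZMod N → ℝ) → (ZMod N → ℝ))
    (hB : ∀ (V : ZMod N → ℝ) (i : ZMod N),
      B V i = if i = j - 1 ∨ i = j
        then V (j - 1) - (ν / (1 + α)) * (V (j - 1) - V (j - 2))
        else V i - ν * (V i - V (i - 1)))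
    (S : (ZMod N → ℝ) → (ZMod N → ℝ))
    (hS : ∀ (W : ZMod N → ℝ) (i : ZMod N),
      S W i = if i = j - 1 ∨ i = j then (1 - α) * W (j - 1) + α * W j else W i)
    (R : ℝ → (ZMod N → ℝ) → (ZMod N → ℝ))
    (hR : ∀ (s : ℝ) (W : ZMod N → ℝ) (i : ZMod N),
      R s W i = (1 - s) * W i + s * S W i)
    (U : ZMod N → ℝ) (s : ℝ) (hs0 : 0 ≤ s) (hs1 : s ≤ 1) :
    ∑ i : ZMod N, Vol i * R s (B (P U)) i = ∑ i : ZMod N, Vol i * U i := by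
  -- basic distinctness facts in `ZMod N`
  haveI : Fact (1 < N) := ⟨by omega⟩
  have h1 : (1 : ZMod N) ≠ 0 := one_ne_zero
  have h2 : (2 : ZMod N) ≠ 0 := by
    have : ((2:ℕ) : ZMod N) ≠ 0 := by
      rw [Ne, ZMod.natCast_eq_zero_iff]
      intro hd
      have := Nat.le_of_dvd (by norm_num) hd
      omega
    simpa using this
  have hjj : j - 1 ≠ j := fun e => h1 (by rwa [sub_eq_self] at e)
  have hj2j : j - 2 ≠ j := fun e => h2 (by rwa [sub_eq_self] at e)
  have hj21 : j - 2 ≠ j - 1 := fun e => h1 (by linear_combination -e)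
  have hα1' : (1:ℝ) + α ≠ 0 := by linarith
  -- telescoping lemma on the periodic grid
  have tele : ∀ g : ZMod N → ℝ, ∑ i : ZMod N, (g i - g (i-1)) = 0 := by
    intro g
    rw [Finset.sum_sub_distrib, sub_eq_zero]
    exact (Equiv.sum_comp (Equiv.subRight (1:ZMod N)) g).symm
  set V : ZMod N → ℝ := P U with hVdef
  set W : ZMod N → ℝ := B V with hWdef
  -- equal values on the merged pair
  have hVeq : V (j-1) = V j := by
    rw [hVdef]; rw [hP, hP, if_pos (Or.inl rfl), if_pos (Or.inr rfl)]
  have hWeq : W (j-1) = W j := by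
    rw [hWdef]; rw [hB, hB, if_pos (Or.inl rfl), if_pos (Or.inr rfl)]
  -- R s acts as the identity on W
  have hRid : ∀ i, R s W i = W i := by
    intro i
    rw [hR, hS]
    by_cases hi : i = j - 1 ∨ i = j
    · rw [if_pos hi]
      rcases hi with rfl | rfl
      · rw [hWeq]; ring
      · rw [hWeq]; ring
    · rw [if_neg hi]; ring
  have step3 : ∑ i : ZMod N, Vol i * R s W i = ∑ i : ZMod N, Vol i * W i :=
    Finset.sum_congr rfl (fun i _ => by rw [hRid])
  -- volumes
  have hVol1 : Vol (j-1) = h := by rw [hVol, if_neg hjj]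
  have hVol2 : Vol (j-2) = h := by rw [hVol, if_neg hj2j]
  have hVolj : Vol j = α * h := by rw [hVol, if_pos rfl]
  -- the B step written in telescoping form
  set g : ZMod N → ℝ :=
    fun i => if i = j - 1 then V (j-2) + (V (j-1) - V (j-2))/(1+α) else V i with hg
  have hgj1 : g (j-1) = V (j-2) + (V (j-1) - V (j-2))/(1+α) := if_pos rfl
  have key : ∀ i, Vol i * W i = Vol i * V i - ν*h*(g i - g (i-1)) := by
    intro i
    rw [hWdef, hB]
    by_cases hi1 : i = j - 1
    · subst hi1
      rw [if_pos (Or.inl rfl), hVol1]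
      have e2 : g (j - 1 - 1) = V (j-2) := by
        have : j - 1 - 1 = j - 2 := by ring
        rw [this, hg]; exact if_neg hj21
      rw [hgj1, e2]
      field_simp
      ring
    · by_cases hi2 : i = j
      · rw [hi2] at *
        rw [if_pos (Or.inr rfl), hVolj]
        have e1 : g j = V j := by rw [hg]; exact if_neg (fun e => hjj e.symm)
        rw [e1, hgj1, ← hVeq]
        field_simp
        ring
      · rw [if_neg (by tauto)]
        have e1 : g i = V i := by rw [hg]; exact if_neg hi1
        have e2 : g (i-1) = V (i-1) := by
          rw [hg]
          refine if_neg (fun e => hi2 ?_)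
          have := sub_left_injective (G := ZMod N) e
          simpa using sub_left_inj.mp e
        rw [e1, e2, hVol, if_neg hi2]
        ring
  have step2 : ∑ i : ZMod N, Vol i * W i = ∑ i : ZMod N, Vol i * V i := by
    calc ∑ i : ZMod N, Vol i * W i
        = ∑ i : ZMod N, (Vol i * V i - ν*h*(g i - g (i-1))) :=
          Finset.sum_congr rfl (fun i _ => key i)
      _ = ∑ i : ZMod N, Vol i * V i - ν*h * ∑ i : ZMod N, (g i - g (i-1)) := by
          rw [Finset.sum_sub_distrib, Finset.mul_sum]
      _ = ∑ i : ZMod N, Vol i * V i := by rw [tele g, mul_zero, sub_zero]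
  -- the P step written in telescoping form
  set c : ℝ := (U (j - 1) + α * U j) / (1 + α) with hc
  set g2 : ZMod N → ℝ := fun i => if i = j - 1 then h*(c - U (j-1)) else 0 with hg2
  have key2 : ∀ i, Vol i * V i = Vol i * U i + (g2 i - g2 (i-1)) := by
    intro i
    rw [hVdef, hP]
    by_cases hi1 : i = j - 1
    · subst hi1
      rw [if_pos (Or.inl rfl), hVol1]
      have e1 : g2 (j-1) = h*(c - U (j-1)) := if_pos rfl
      have e2 : g2 (j - 1 - 1) = 0 := by
        have : j - 1 - 1 = j - 2 := by ring
        rw [this, hg2]; exact if_neg hj21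
      rw [e1, e2, ← hc]
      ring
    · by_cases hi2 : i = j
      · rw [hi2] at *
        rw [if_pos (Or.inr rfl), hVolj]
        have e1 : g2 j = 0 := by rw [hg2]; exact if_neg (fun e => hjj e.symm)
        have e2 : g2 (j-1) = h*(c - U (j-1)) := if_pos rfl
        rw [e1, e2, ← hc, hc]
        field_simp
        ring
      · rw [if_neg (by tauto)]
        have e1 : g2 i = 0 := by rw [hg2]; exact if_neg hi1
        have e2 : g2 (i-1) = 0 := by
          rw [hg2]
          exact if_neg (fun e => hi2 (by simpa using sub_left_inj.mp e))
        rw [e1, e2]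
        ring
  have step1 : ∑ i : ZMod N, Vol i * V i = ∑ i : ZMod N, Vol i * U i := by
    calc ∑ i : ZMod N, Vol i * V i
        = ∑ i : ZMod N, (Vol i * U i + (g2 i - g2 (i-1))) :=
          Finset.sum_congr rfl (fun i _ => key2 i)
      _ = ∑ i : ZMod N, Vol i * U i + ∑ i : ZMod N, (g2 i - g2 (i-1)) := by
          rw [Finset.sum_add_distrib]
      _ = ∑ i : ZMod N, Vol i * U i := by rw [tele g2, add_zero]
  rw [step3, step2, step1]
end

section
/- Fix an integer N ≥ 4, an index j : ZMod N, and α with 0 < α < 1/2. Let S be the SRD operator that replaces both entries V_{j−1} and V_j by (1−α)·V_{j−1} + α·V_j and leaves other entries unchanged, and for s ∈ ℝ let R(s)V = (1−s)·V + s·(S V). Let h > 0, L ≥ 0, C ≥ 0 and let p be a natural number with p ≥ 1. If 0 ≤ s ≤ C·h^p and |V_{j−1} − V_j| ≤ L·h, then sup_i |[R(s)V]_i − V_i| ≤ C·L·h^(p+1). -/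
/-- Remark 4.6 (higher-order perturbation with an unnormalized indicator):
if the blending parameter satisfies `0 ≤ s ≤ C·h^p` with `p ≥ 1`, and the data
are smooth in the sense `|V_{j-1} - V_j| ≤ L·h`, then the sup-norm of the
UM-SRD perturbation `R(s)V - V` is at most `C·L·h^(p+1)`. -/
theorem umsrd_higher_order_perturbation
    (N : ℕ) (hN : 4 ≤ N) [NeZero N] (j : ZMod N)
    (α : ℝ) (hα0 : 0 < α) (hα1 : α < 1/2)
    (S : (ZMod N → ℝ) → (ZMod N → ℝ))
    (hS : ∀ (V : ZMod N → ℝ) (i : ZMod N),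
      S V i = if i = j - 1 ∨ i = j then (1 - α) * V (j - 1) + α * V j else V i)
    (R : ℝ → (ZMod N → ℝ) → (ZMod N → ℝ))
    (hR : ∀ (s : ℝ) (V : ZMod N → ℝ) (i : ZMod N),
      R s V i = (1 - s) * V i + s * S V i)
    (V : ZMod N → ℝ) (s h L C : ℝ) (p : ℕ) (hp : 1 ≤ p)
    (hh : 0 < h) (hL : 0 ≤ L) (hC : 0 ≤ C)
    (hs0 : 0 ≤ s) (hs : s ≤ C * h ^ p)
    (hsmooth : |V (j - 1) - V j| ≤ L * h) :
    (⨆ i : ZMod N, |R s V i - V i|) ≤ C * L * h ^ (p + 1) := by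
  have key : ∀ i : ZMod N, |R s V i - V i| ≤ C * L * h ^ (p + 1) := by
    intro i
    have hRi : R s V i - V i = s * (S V i - V i) := by rw [hR]; ring
    rw [hRi, hS]
    by_cases hij : i = j - 1 ∨ i = j
    · have hbound : |(if i = j - 1 ∨ i = j then (1 - α) * V (j - 1) + α * V j else V i) - V i|
          ≤ L * h := by
        rw [if_pos hij]
        rcases hij with h1 | h2
        · rw [h1]
          have : (1 - α) * V (j - 1) + α * V j - V (j - 1) = -(α * (V (j-1) - V j)) := by ring
          rw [this, abs_neg, abs_mul, abs_of_pos hα0]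
          calc α * |V (j-1) - V j| ≤ 1 * |V (j-1) - V j| := by
                apply mul_le_mul_of_nonneg_right (by linarith) (abs_nonneg _)
            _ = |V (j-1) - V j| := one_mul _
            _ ≤ L * h := hsmooth
        · rw [h2]
          have : (1 - α) * V (j - 1) + α * V j - V j = (1 - α) * (V (j-1) - V j) := by ring
          rw [this, abs_mul, abs_of_pos (by linarith : (0:ℝ) < 1 - α)]
          calc (1 - α) * |V (j-1) - V j| ≤ 1 * |V (j-1) - V j| := by
                apply mul_le_mul_of_nonneg_right (by linarith) (abs_nonneg _)
            _ = |V (j-1) - V j| := one_mul _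
            _ ≤ L * h := hsmooth
      rw [abs_mul, abs_of_nonneg hs0]
      calc s * |(if i = j - 1 ∨ i = j then (1 - α) * V (j - 1) + α * V j else V i) - V i|
          ≤ (C * h ^ p) * (L * h) := by
            apply mul_le_mul hs hbound (abs_nonneg _)
            exact le_trans hs0 hs
        _ = C * L * h ^ (p + 1) := by rw [pow_succ]; ring
    · rw [if_neg hij]
      simp only [sub_self, mul_zero, abs_zero]
      positivity
  exact ciSup_le key
end

section
/- Fix an integer N ≥ 4, an index j : ZMod N, and α with 0 < α < 1. Let S be the SRD operator that replaces both entries U_{j−1} and U_j by (1−α)·U_{j−1} + α·U_j and leaves other entries unchanged. Then for every U : ZMod N → ℝ: S U = U if and only if U_{j−1} = U_j. In particular, if the finite-volume update vanishes (U* = U^n) and U^n_{j−1} ≠ U^n_j, then one step of standard SRD produces U^{n+1} = S U^n ≠ U^n, so SRD does not preserve non-constant steady states. -/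
/-- Proposition 4.7 (SRD perturbs non-constant steady states): the SRD operator
`S`, which replaces both entries `U_{j-1}` and `U_j` by
`(1-α)·U_{j-1} + α·U_j` and leaves other entries unchanged, fixes `U` if and
only if `U_{j-1} = U_j`. In particular, when the finite-volume update vanishes
(`U* = U^n`) and `U^n_{j-1} ≠ U^n_j`, one step of standard SRD produces
`U^{n+1} = S U^n ≠ U^n`. -/
theorem srd_perturbs_nonconstant_steady_states
    (N : ℕ) (hN : 4 ≤ N) [NeZero N] (j : ZMod N)
    (α : ℝ) (hα0 : 0 < α) (hα1 : α < 1)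
    (S : (ZMod N → ℝ) → (ZMod N → ℝ))
    (hS : ∀ (U : ZMod N → ℝ) (i : ZMod N),
      S U i = if i = j - 1 ∨ i = j then (1 - α) * U (j - 1) + α * U j else U i)
    (U : ZMod N → ℝ) :
    (S U = U ↔ U (j - 1) = U j) ∧
    (U (j - 1) ≠ U j → S U ≠ U) := by
  have hiff : S U = U ↔ U (j - 1) = U j := by
    constructor
    · intro h
      have hj := hS U j
      rw [h] at hj
      simp only [or_true, if_true] at hj
      nlinarith [hj]
    · intro h
      funext i
      rw [hS U i]
      split
      · rename_i hi
        rw [h]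
        rcases hi with hi | hi
        · rw [hi, h]; ring
        · rw [hi]; ring
      · rfl
  exact ⟨hiff, fun hne h => hne (hiff.mp h)⟩
end
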